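/- (Eigenvector transfer theorem) Suppose q satisfies the unitarity condition, and let U = K L* − J₀ be the quaternionic Szegedy transition matrix with a(e) = √2 q(e), b(e) = √2 q(e⁻¹). If v ∈ ℍⁿ satisfies W̃ v = v μ for a complex right eigenvalue μ, and λ ∈ ℂ∖{0} satisfies μ = λ + 1/λ, then the vector e = J₀ L v − L v (1/λ) ∈ ℍ^{m'} satisfies U e = e λ. -/

import Mathlib

/-
With `K = J₀ L` (reversing an arc swaps its origin and terminus), the Szegedy matrix factors as
`U = K L* - J₀`, and the unitarity condition gives `L* L = 2`; moreover `J₀² = 1` and `L* K = W̃`.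
For `e = K v - L v λ⁻¹` this yields
`U e = K v μ - 2 K v λ⁻¹ - L v + K v λ⁻¹ = K v (μ - λ⁻¹) - L v = K v λ - L v λ⁻¹ λ = e λ`,
using `μ = λ + λ⁻¹`. Matrices act on the left and scalars on the right, so the two commute and the
computation is valid over the quaternions.
-/

open Quaternion Matrix Finset

noncomputable section

/-- Simplex part of a quaternion: `x = S(x) + j·P(x)`. -/
def qS (x : Quaternion ℝ) : ℂ := ⟨x.re, x.imI⟩

/-- Perplex part of a quaternion. -/
def qP (x : Quaternion ℝ) : ℂ := ⟨x.imJ, -x.imK⟩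

/-- Embedding of `ℂ` into the quaternions (span of `1, i`). -/
def cq (z : ℂ) : Quaternion ℝ := ⟨z.re, z.im, 0, 0⟩

/-- The quaternion unit `j`. -/
def jq : Quaternion ℝ := ⟨0, 0, 1, 0⟩

/-- The standard complex representation of a quaternionic matrix `M = A + jB`,
`ψ(M) = [[A, -conj B],[B, conj A]]`. -/
def psi {m n : Type*} (M : Matrix m n (Quaternion ℝ)) :
    Matrix (m ⊕ m) (n ⊕ n) ℂ :=
  Matrix.fromBlocks (M.map qS) (-(M.map fun x => star (qP x)))
    (M.map qP) (M.map fun x => star (qS x))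

variable {V : Type*}

/-- Arc-by-vertex matrix `K` with `K_{ev} = a(e)` if `o(e) = v`. Arcs are the
elements of a symmetric finite set `E` of ordered pairs of vertices. -/
def Karc [DecidableEq V] (E : Finset (V × V)) (a : V × V → Quaternion ℝ) :
    Matrix ↥E V (Quaternion ℝ) :=
  Matrix.of fun e v => if e.1.1 = v then a e.1 else 0

/-- Arc-by-vertex matrix `L` with `L_{ev} = b(e)` if `t(e) = v`. -/
def Larc [DecidableEq V] (E : Finset (V × V)) (b : V × V → Quaternion ℝ) :
    Matrix ↥E V (Quaternion ℝ) :=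
  Matrix.of fun e v => if e.1.2 = v then b e.1 else 0

/-- The arc-inversion matrix `J₀` with `(J₀)_{ef} = 1` iff `f = e⁻¹`. -/
def J0 [DecidableEq V] (E : Finset (V × V)) : Matrix ↥E ↥E (Quaternion ℝ) :=
  Matrix.of fun e f => if f.1 = Prod.swap e.1 then 1 else 0

/-- Transition matrix of the quaternionic Szegedy walk. -/
def SzeU [DecidableEq V] (E : Finset (V × V)) (q : V × V → Quaternion ℝ) :
    Matrix ↥E ↥E (Quaternion ℝ) :=
  Matrix.of fun e f =>
    if f.1 = Prod.swap e.1 then 2 * (q e.1 * star (q e.1)) - 1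
    else if f.1.2 = e.1.1 then 2 * (q e.1 * star (q (Prod.swap f.1))) else 0

/-- The doubly weighted matrix `W̃` for general arc weights `a, b`. -/
def Wt [DecidableEq V] (E : Finset (V × V)) (a b : V × V → Quaternion ℝ) :
    Matrix V V (Quaternion ℝ) :=
  Matrix.of fun u v => if (v, u) ∈ E then star (b (v, u)) * a (v, u) else 0

/-- The diagonal matrix `D̃` with `D̃_{uu} = Σ_{o(e)=u} b(e⁻¹)* a(e)`. -/
def Dt [DecidableEq V] (E : Finset (V × V)) (a b : V × V → Quaternion ℝ) :
    Matrix V V (Quaternion ℝ) :=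
  Matrix.of fun u v =>
    if u = v then ∑ e ∈ E.filter (fun p => p.1 = u), star (b (Prod.swap e)) * a e else 0

/-- The doubly weighted matrix of the quaternionic Szegedy walk. -/
def Wtil [DecidableEq V] (E : Finset (V × V)) (q : V × V → Quaternion ℝ) :
    Matrix V V (Quaternion ℝ) :=
  Matrix.of fun u v => if (v, u) ∈ E then 2 * (star (q (u, v)) * q (v, u)) else 0

/-- The number of loops of the graph. -/
def nLoops [DecidableEq V] (E : Finset (V × V)) : ℕ :=
  (E.filter fun p => p.1 = p.2).card


open MulOpposite

theorem Matrix.mulVec_eigenvector_transfer {R m n : Type*} [Ring R] [Fintype m] [DecidableEq m]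
    [Fintype n] [DecidableEq n] {J : Matrix m m R} {L : Matrix m n R} {B : Matrix n m R}
    {v : n → R} {μ l c : R} (hJ : J * J = 1) (hBL : B * L = 2)
    (hv : (B * (J * L)) *ᵥ v = op μ • v) (hc : c * l = 1) (hμ : μ = l + c) :
    (J * L * B - J) *ᵥ ((J * L) *ᵥ v - op c • L *ᵥ v) =
      op l • ((J * L) *ᵥ v - op c • L *ᵥ v) := by
  have hKBK : (J * L * B) *ᵥ ((J * L) *ᵥ v) = op μ • (J * L) *ᵥ v := by
    rw [mulVec_mulVec, Matrix.mul_assoc, ← mulVec_mulVec, hv, mulVec_smul]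
  have hKBL : (J * L * B) *ᵥ (op c • L *ᵥ v) = op c • ((J * L) *ᵥ v + (J * L) *ᵥ v) := by
    rw [mulVec_smul, mulVec_mulVec, Matrix.mul_assoc, hBL, ← mulVec_mulVec, ofNat_mulVec,
      two_smul, mulVec_add]
  have hJK : J *ᵥ ((J * L) *ᵥ v) = L *ᵥ v := by
    rw [mulVec_mulVec, ← Matrix.mul_assoc, hJ, Matrix.one_mul]
  have hJL : J *ᵥ (op c • L *ᵥ v) = op c • (J * L) *ᵥ v := by
    rw [mulVec_smul, mulVec_mulVec]
  rw [sub_mulVec, mulVec_sub, mulVec_sub, hKBK, hKBL, hJK, hJL]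
  have hcl : op l • op c • L *ᵥ v = L *ᵥ v := by
    rw [smul_smul, ← op_mul, hc, op_one, one_smul]
  rw [smul_sub, hcl, hμ, op_add, add_smul, smul_add]
  abel

theorem cq_add (z w : ℂ) : cq (z + w) = cq z + cq w := by
  ext <;> simp only [re_add, imI_add, imJ_add, imK_add] <;> simp [cq]

theorem cq_mul (z w : ℂ) : cq (z * w) = cq z * cq w := by
  ext <;> simp only [re_mul, imI_mul, imJ_mul, imK_mul] <;> simp [cq]

theorem cq_one : cq 1 = 1 := by
  ext <;> simp [cq]

theorem sqrt_two_mul_mul_star_sqrt_two_mul (x y : ℍ) :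
    ((√2 : ℝ) : ℍ) * x * star (((√2 : ℝ) : ℍ) * y) = 2 * (x * star y) := by
  rw [coe_mul_eq_smul, coe_mul_eq_smul, Quaternion.star_smul, smul_mul_smul_comm,
    Real.mul_self_sqrt zero_le_two, Algebra.smul_def, map_ofNat]

theorem star_sqrt_two_mul_mul_sqrt_two_mul (x y : ℍ) :
    star (((√2 : ℝ) : ℍ) * x) * (((√2 : ℝ) : ℍ) * y) = 2 * (star x * y) := by
  rw [coe_mul_eq_smul, coe_mul_eq_smul, Quaternion.star_smul, smul_mul_smul_comm,
    Real.mul_self_sqrt zero_le_two, Algebra.smul_def, map_ofNat]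

section Arcs

variable [DecidableEq V] {E : Finset (V × V)}

theorem Finset.sum_filter_snd_comp_swap {M : Type*} [AddCommMonoid M]
    (hsym : ∀ p ∈ E, Prod.swap p ∈ E) (f : V × V → M) (u : V) :
    ∑ p ∈ E with p.2 = u, f (Prod.swap p) = ∑ p ∈ E with p.1 = u, f p := by
  refine Finset.sum_nbij' Prod.swap Prod.swap ?_ ?_ (fun p _ => p.swap_swap)
    (fun p _ => p.swap_swap) (fun _ _ => rfl) <;>
  · intro p hp
    simp only [Finset.mem_filter] at hp ⊢
    exact ⟨hsym _ hp.1, hp.2⟩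

theorem J0_mul_J0 (hsym : ∀ p ∈ E, Prod.swap p ∈ E) : J0 E * J0 E = 1 := by
  refine Matrix.ext fun e f => ?_
  rw [mul_apply, Finset.sum_eq_single ⟨_, hsym _ e.2⟩]
  · simp [J0, one_apply, eq_comm (a := f)]
  · intro g _ hg
    simp [J0, show g.1 ≠ Prod.swap e.1 from fun h => hg (Subtype.ext h)]
  · simp

theorem J0_mul_Larc (hsym : ∀ p ∈ E, Prod.swap p ∈ E) {a b : V × V → ℍ}
    (hab : ∀ p, a p = b (Prod.swap p)) : J0 E * Larc E b = Karc E a := by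
  refine Matrix.ext fun e w => ?_
  rw [mul_apply, Finset.sum_eq_single ⟨_, hsym _ e.2⟩]
  · simp [J0, Larc, Karc, hab]
  · intro g _ hg
    simp [J0, show g.1 ≠ Prod.swap e.1 from fun h => hg (Subtype.ext h)]
  · simp

theorem conjTranspose_Larc_mul_Karc (a b : V × V → ℍ) : (Larc E b)ᴴ * Karc E a = Wt E a b := by
  refine Matrix.ext fun u w => ?_
  have hterm (g : E) : star (Larc E b g u) * Karc E a g w =
      if g.1 = (w, u) then star (b (w, u)) * a (w, u) else 0 := by
    obtain ⟨⟨x, y⟩, _⟩ := g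
    by_cases hy : y = u <;> by_cases hx : x = w <;> simp [Larc, Karc, hx, hy]
  simp only [mul_apply, conjTranspose_apply, hterm, Wt, of_apply]
  rw [Finset.sum_coe_sort E (fun g => if g = (w, u) then star (b (w, u)) * a (w, u) else 0),
    Finset.sum_ite_eq']

theorem conjTranspose_Larc_mul_Larc (b : V × V → ℍ) :
    (Larc E b)ᴴ * Larc E b =
      diagonal fun u => ∑ p ∈ E with p.2 = u, ((normSq (b p) : ℝ) : ℍ) := by
  refine Matrix.ext fun u w => ?_
  rw [mul_apply]
  obtain rfl | huw := eq_or_ne u w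
  · have hterm (g : E) : star (Larc E b g u) * Larc E b g u =
        if g.1.2 = u then ((normSq (b g.1) : ℝ) : ℍ) else 0 := by
      by_cases hg : g.1.2 = u <;> simp [Larc, hg, star_mul_self]
    simp only [conjTranspose_apply, hterm, diagonal_apply_eq]
    rw [Finset.sum_coe_sort E (fun g => if g.2 = u then ((normSq (b g) : ℝ) : ℍ) else 0),
      Finset.sum_filter]
  · refine (Finset.sum_eq_zero fun g _ => ?_).trans (diagonal_apply_ne _ huw).symm
    by_cases hg : g.1.2 = u
    · simp [Larc, hg, huw]
    · simp [Larc, hg]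

theorem Karc_mul_conjTranspose_Larc [Fintype V] (a b : V × V → ℍ) :
    Karc E a * (Larc E b)ᴴ =
      of fun e f : E => if f.1.2 = e.1.1 then a e.1 * star (b f.1) else 0 := by
  refine Matrix.ext fun e f => ?_
  simp [mul_apply, Karc, Larc, apply_ite star, ite_mul, mul_ite, eq_comm (a := e.1.1)]

end Arcs

section Szegedy

variable [DecidableEq V] {E : Finset (V × V)} (q : V × V → ℍ)

theorem SzeU_eq_Karc_mul_conjTranspose_Larc_sub_J0 [Fintype V] :
    SzeU E q = Karc E (fun p => ((√2 : ℝ) : ℍ) * q p) *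
      (Larc E fun p => ((√2 : ℝ) : ℍ) * q (Prod.swap p))ᴴ - J0 E := by
  rw [Karc_mul_conjTranspose_Larc]
  refine Matrix.ext fun e f => ?_
  simp only [SzeU, J0, Matrix.sub_apply, of_apply, sqrt_two_mul_mul_star_sqrt_two_mul]
  by_cases hf : f.1 = Prod.swap e.1 <;> simp [hf]

theorem Wt_sqrt_two_mul_eq_Wtil :
    Wt E (fun p => ((√2 : ℝ) : ℍ) * q p) (fun p => ((√2 : ℝ) : ℍ) * q (Prod.swap p)) =
      Wtil E q := by
  refine Matrix.ext fun u w => ?_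
  simp only [Wt, Wtil, of_apply, Prod.swap_prod_mk, star_sqrt_two_mul_mul_sqrt_two_mul]

theorem conjTranspose_Larc_mul_Larc_eq_two (hsym : ∀ p ∈ E, Prod.swap p ∈ E)
    (hu : ∀ u : V, ∑ e ∈ E.filter (fun p => p.1 = u), Quaternion.normSq (q e) = 1) :
    (Larc E fun p => ((√2 : ℝ) : ℍ) * q (Prod.swap p))ᴴ *
      Larc E (fun p => ((√2 : ℝ) : ℍ) * q (Prod.swap p)) = 2 := by
  rw [conjTranspose_Larc_mul_Larc, ← diagonal_ofNat]
  congr 1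
  funext u
  rw [Finset.sum_filter_snd_comp_swap hsym fun p => ((normSq (((√2 : ℝ) : ℍ) * q p) : ℝ) : ℍ)]
  have hsum : ∑ p ∈ E with p.1 = u, normSq (((√2 : ℝ) : ℍ) * q p) = 2 := by
    simp only [map_mul, normSq_coe, Real.sq_sqrt zero_le_two, ← Finset.mul_sum, hu, mul_one]
  simpa only [← algebraMap_def, map_sum, map_ofNat] using congrArg ((↑) : ℝ → ℍ) hsum

end Szegedy

theorem szegedy_eigenvector_transfer_general [Fintype V] [DecidableEq V] (E : Finset (V × V))
    (hsym : ∀ p ∈ E, Prod.swap p ∈ E)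
    (q : V × V → Quaternion ℝ)
    (hu : ∀ u : V, ∑ e ∈ E.filter (fun p => p.1 = u), Quaternion.normSq (q e) = 1)
    (b : V × V → Quaternion ℝ)
    (hb : b = fun p => ((Real.sqrt 2 : ℝ) : Quaternion ℝ) * q (Prod.swap p))
    (v : V → Quaternion ℝ) (μ l : ℂ) (hl : l ≠ 0) (hμ : μ = l + 1 / l)
    (hv : (Wtil E q).mulVec v = fun u => v u * cq μ) :
    (SzeU E q).mulVec
        (fun x => (J0 E * Larc E b).mulVec v x - (Larc E b).mulVec v x * cq (1 / l)) =
      fun x =>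
        ((J0 E * Larc E b).mulVec v x - (Larc E b).mulVec v x * cq (1 / l)) * cq l := by
  subst hb
  have hK := J0_mul_Larc hsym (a := fun p => ((√2 : ℝ) : ℍ) * q p)
    (b := fun p => ((√2 : ℝ) : ℍ) * q p.swap) fun p => by simp only [Prod.swap_swap]
  rw [← Wt_sqrt_two_mul_eq_Wtil, ← conjTranspose_Larc_mul_Karc, ← hK] at hv
  rw [SzeU_eq_Karc_mul_conjTranspose_Larc_sub_J0, ← hK]
  have hc : cq (1 / l) * cq l = 1 := by rw [← cq_mul, one_div, inv_mul_cancel₀ hl, cq_one]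
  have hcμ : cq μ = cq l + cq (1 / l) := by rw [hμ, cq_add]
  exact Matrix.mulVec_eigenvector_transfer (J0_mul_J0 hsym)
    (conjTranspose_Larc_mul_Larc_eq_two q hsym hu) hv hc hcμ

theorem szegedy_eigenvector_transfer [Fintype V] [DecidableEq V] (E : Finset (V × V))
    (hsym : ∀ p ∈ E, Prod.swap p ∈ E)
    (hconn : ∀ u v : V, Relation.ReflTransGen (fun x y => (x, y) ∈ E) u v)
    (q : V × V → Quaternion ℝ) (hq : ∀ p ∈ E, q p ≠ 0)
    (hu : ∀ u : V, ∑ e ∈ E.filter (fun p => p.1 = u), Quaternion.normSq (q e) = 1)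
    (b : V × V → Quaternion ℝ)
    (hb : b = fun p => ((Real.sqrt 2 : ℝ) : Quaternion ℝ) * q (Prod.swap p))
    (v : V → Quaternion ℝ) (μ l : ℂ) (hl : l ≠ 0) (hμ : μ = l + 1 / l)
    (hv : (Wtil E q).mulVec v = fun u => v u * cq μ) :
    (SzeU E q).mulVec
        (fun x => (J0 E * Larc E b).mulVec v x - (Larc E b).mulVec v x * cq (1 / l)) =
      fun x =>
        ((J0 E * Larc E b).mulVec v x - (Larc E b).mulVec v x * cq (1 / l)) * cq l :=
  szegedy_eigenvector_transfer_general E hsym q hu b hb v μ l hl hμ hv
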